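/- arXiv:math/0703196 — 2 statements merged into one kernel-verified Lean document; each statement's English description precedes it below -/
import Mathlib

section
/- If φ : π₁(Σ_g) → F_n is a surjective group homomorphism from the fundamental group of a closed orientable surface of genus g onto the free group of rank n, then n ≤ g. -/
/-- The commutator `x⁻¹ y⁻¹ x y`. -/
def commE {G : Type*} [Group G] (x y : G) : G := x⁻¹ * y⁻¹ * x * y

/-- The surface relator `[a₁,b₁]⋯[a_g,b_g]` in the free group on `a₁,…,a_g,b₁,…,b_g`. -/
def surfaceRel (g : ℕ) : FreeGroup (Fin g ⊕ Fin g) :=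
  (List.ofFn fun i : Fin g =>
    commE (FreeGroup.of (Sum.inl i)) (FreeGroup.of (Sum.inr i))).prod

/-- The fundamental group of the closed orientable surface of genus `g`. -/
abbrev SurfaceGroup (g : ℕ) : Type := PresentedGroup {surfaceRel g}

/-!
A surjection `φ : π₁(Σ_g) → F_n` pulls `H¹(F_n; ℚ) = ℚⁿ` back injectively into
`H¹(Σ_g; ℚ) ⊆ ℚ^{2g}`, a class being recorded by its values on the generators `aᵢ, bᵢ`.
The image is isotropic for the symplectic form `J`: two classes `v, w` of the free group lift
jointly to a homomorphism into the Heisenberg group, and the surface relator, a product of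
commutators, maps to the central element `∑ᵢ v(aᵢ) w(bᵢ) - v(bᵢ) w(aᵢ)`, which therefore
vanishes. An isotropic subspace for a nondegenerate form on `ℚ^{2g}` has dimension at most `g`.
-/

-- `⟨a, b, c⟩` is the unitriangular matrix `!![1, a, c; 0, 1, b; 0, 0, 1]`.
@[ext]
structure Heisenberg (R : Type*) where
  a : R
  b : R
  c : R

namespace Heisenberg

variable {R : Type*} [CommRing R]

instance : Mul (Heisenberg R) := ⟨fun x y => ⟨x.a + y.a, x.b + y.b, x.c + y.c + x.a * y.b⟩⟩
instance : One (Heisenberg R) := ⟨⟨0, 0, 0⟩⟩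
instance : Inv (Heisenberg R) := ⟨fun x => ⟨-x.a, -x.b, -x.c + x.a * x.b⟩⟩

@[simp] lemma mul_a (x y : Heisenberg R) : (x * y).a = x.a + y.a := rfl
@[simp] lemma mul_b (x y : Heisenberg R) : (x * y).b = x.b + y.b := rfl
@[simp] lemma mul_c (x y : Heisenberg R) : (x * y).c = x.c + y.c + x.a * y.b := rfl
@[simp] lemma one_a : (1 : Heisenberg R).a = 0 := rfl
@[simp] lemma one_b : (1 : Heisenberg R).b = 0 := rfl
@[simp] lemma one_c : (1 : Heisenberg R).c = 0 := rfl
@[simp] lemma inv_a (x : Heisenberg R) : x⁻¹.a = -x.a := rfl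
@[simp] lemma inv_b (x : Heisenberg R) : x⁻¹.b = -x.b := rfl
@[simp] lemma inv_c (x : Heisenberg R) : x⁻¹.c = -x.c + x.a * x.b := rfl

instance : Group (Heisenberg R) where
  mul_assoc x y z := by ext <;> simp <;> ring
  one_mul x := by ext <;> simp
  mul_one x := by ext <;> simp
  inv_mul_cancel x := by ext <;> simp

def fstHom : Heisenberg R →* Multiplicative R where
  toFun x := .ofAdd x.a
  map_one' := rfl
  map_mul' _ _ := rfl

def sndHom : Heisenberg R →* Multiplicative R where
  toFun x := .ofAdd x.b
  map_one' := rfl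
  map_mul' _ _ := rfl

def ofCenter : Multiplicative R →* Heisenberg R where
  toFun t := ⟨0, 0, t.toAdd⟩
  map_one' := rfl
  map_mul' _ _ := by ext <;> simp

lemma commE_eq (x y : Heisenberg R) : commE x y = ofCenter (.ofAdd (x.a * y.b - y.a * x.b)) := by
  ext <;> simp [commE, ofCenter]; ring

end Heisenberg

lemma map_commE {G H : Type*} [Group G] [Group H] (f : G →* H) (x y : G) :
    f (commE x y) = commE (f x) (f y) := by
  simp [commE]

lemma map_surfaceRel {H : Type*} [Group H] {g : ℕ} (f : FreeGroup (Fin g ⊕ Fin g) →* H) :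
    f (surfaceRel g) = (List.ofFn fun i => commE (f (.of (.inl i))) (f (.of (.inr i)))).prod := by
  simp only [surfaceRel, map_list_prod, List.map_ofFn, Function.comp_def, map_commE]

lemma Heisenberg.sum_symplectic_eq_zero_of_surfaceGroup {R : Type*} [CommRing R] {g : ℕ}
    (ψ : SurfaceGroup g →* Heisenberg R) :
    ∑ i, ((ψ (.of (.inl i))).a * (ψ (.of (.inr i))).b
      - (ψ (.of (.inr i))).a * (ψ (.of (.inl i))).b) = 0 := by
  have hrel := congr_arg ψ (PresentedGroup.one_of_mem (Set.mem_singleton (surfaceRel g)))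
  have hprod (t : Fin g → Multiplicative R) :
      (List.ofFn fun i => ofCenter (t i)).prod = ofCenter (∏ i, t i) := by
    rw [← List.prod_ofFn, map_list_prod, List.map_ofFn, Function.comp_def]
  rw [map_one, ← MonoidHom.comp_apply, map_surfaceRel] at hrel
  simp only [commE_eq, hprod, ← ofAdd_sum] at hrel
  exact congr_arg Heisenberg.c hrel

namespace FreeGroup

variable {α R : Type*} [CommRing R]

def addLift (v : α → R) : FreeGroup α →* Multiplicative R := lift (.ofAdd ∘ v)

@[simp] lemma addLift_of (v : α → R) (i : α) : addLift v (of i) = .ofAdd (v i) := by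
  simp [addLift]

lemma addLift_add (v w : α → R) : addLift (v + w) = addLift v * addLift w :=
  ext_hom _ _ fun i => by simp [ofAdd_add]

lemma addLift_smul (c : R) (v : α → R) :
    addLift (c • v) = (AddMonoidHom.mulLeft c).toMultiplicative.comp (addLift v) :=
  ext_hom _ _ fun i => by simp

end FreeGroup

section Pullback

variable {G α β R : Type*} [Group G] [CommRing R]

-- A class in `H¹(G; R) = Hom(G, R)` is recorded by its values on the family `x`.
def cohomologyPullback (φ : G →* FreeGroup α) (x : β → G) : (α → R) →ₗ[R] (β → R) where
  toFun v s := (FreeGroup.addLift v (φ (x s))).toAdd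
  map_add' v w := by ext s; simp [FreeGroup.addLift_add]
  map_smul' c v := by ext s; simp [FreeGroup.addLift_smul]

lemma cohomologyPullback_injective {φ : G →* FreeGroup α} (hφ : Function.Surjective φ)
    {x : β → G} (hx : Subgroup.closure (Set.range x) = ⊤) :
    Function.Injective (cohomologyPullback (R := R) φ x) := by
  refine (injective_iff_map_eq_zero _).mpr fun v hv => funext fun i => ?_
  have hkill : (FreeGroup.addLift v).comp φ = 1 := by
    refine MonoidHom.eq_of_eqOn_dense hx ?_
    rintro _ ⟨s, rfl⟩
    exact congr_arg Multiplicative.ofAdd (congr_fun hv s)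
  obtain ⟨y, hy⟩ := hφ (.of i)
  simpa [hy] using congr_arg Multiplicative.toAdd (DFunLike.congr_fun hkill y)

end Pullback

open Matrix in
lemma Matrix.toBilin'_J_apply {ι R : Type*} [Fintype ι] [DecidableEq ι] [CommRing R]
    (x y : ι ⊕ ι → R) :
    (J ι R).toBilin' x y = ∑ i, (x (.inr i) * y (.inl i) - x (.inl i) * y (.inr i)) := by
  simp [toBilin'_apply', J, dotProduct, mulVec, Fintype.sum_sum_type, one_apply,
    Finset.sum_sub_distrib]
  ring

lemma Matrix.nondegenerate_toBilin'_J {ι K : Type*} [Fintype ι] [DecidableEq ι] [Field K] :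
    (J ι K).toBilin'.Nondegenerate :=
  LinearMap.BilinForm.nondegenerate_toBilin'_of_det_ne_zero' _
    (left_ne_zero_of_mul_eq_one (J_det_mul_J_det ι K))

lemma toBilin'_J_cohomologyPullback_eq_zero {α R : Type*} [CommRing R] {g : ℕ}
    (φ : SurfaceGroup g →* FreeGroup α) (v w : α → R) :
    (Matrix.J (Fin g) R).toBilin' (cohomologyPullback φ PresentedGroup.of v)
      (cohomologyPullback φ PresentedGroup.of w) = 0 := by
  let h : FreeGroup α →* Heisenberg R := FreeGroup.lift fun i => ⟨v i, w i, 0⟩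
  have ha : Heisenberg.fstHom.comp h = FreeGroup.addLift v :=
    FreeGroup.ext_hom _ _ fun i => by simp [h, Heisenberg.fstHom]
  have hb : Heisenberg.sndHom.comp h = FreeGroup.addLift w :=
    FreeGroup.ext_hom _ _ fun i => by simp [h, Heisenberg.sndHom]
  have := Heisenberg.sum_symplectic_eq_zero_of_surfaceGroup (h.comp φ)
  rw [Matrix.toBilin'_J_apply, ← neg_eq_zero, ← Finset.sum_neg_distrib]
  simpa [cohomologyPullback, ← ha, ← hb, Heisenberg.fstHom, Heisenberg.sndHom] using this

lemma LinearMap.BilinForm.two_mul_finrank_le_of_le_orthogonal {K V : Type*} [Field K]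
    [AddCommGroup V] [Module K V] [FiniteDimensional K V] {B : LinearMap.BilinForm K V}
    (hB : B.Nondegenerate) {W : Submodule K V} (hW : W ≤ B.orthogonal W) :
    2 * Module.finrank K W ≤ Module.finrank K V := by
  have := Submodule.finrank_mono hW
  rw [finrank_orthogonal hB] at this
  have := Submodule.finrank_le W
  omega

theorem zieschang_surjective_onto_free (g n : ℕ)
    (φ : SurfaceGroup g →* FreeGroup (Fin n)) (hφ : Function.Surjective φ) :
    n ≤ g := by
  let Φ := cohomologyPullback (R := ℚ) φ PresentedGroup.of
  have hΦ : Function.Injective Φ :=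
    cohomologyPullback_injective hφ (PresentedGroup.closure_range_of _)
  have hiso :
      LinearMap.range Φ ≤ (Matrix.J (Fin g) ℚ).toBilin'.orthogonal (LinearMap.range Φ) := by
    rintro _ ⟨w, rfl⟩ _ ⟨v, rfl⟩
    exact toBilin'_J_cohomologyPullback_eq_zero φ v w
  have := LinearMap.BilinForm.two_mul_finrank_le_of_le_orthogonal
    Matrix.nondegenerate_toBilin'_J hiso
  simp only [LinearMap.finrank_range_of_inj hΦ, Module.finrank_fintype_fun_eq_card,
    Fintype.card_sum, Fintype.card_fin] at this
  omega
end

section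
/- In the surface group π₁(Σ_g) = ⟨a₁,b₁,…,a_g,b_g | ∏ᵢ[aᵢ,bᵢ]⟩, the subgroup generated by a₁, a₂, …, a_g is a free group of rank g. -/
/-- Kill the `b` generators, keep the `a` generators. -/
def killB (g : ℕ) : Fin g ⊕ Fin g → FreeGroup (Fin g) :=
  Sum.elim FreeGroup.of (fun _ => 1)

lemma killB_rel (g : ℕ) : FreeGroup.lift (killB g) (surfaceRel g) = 1 := by
  unfold surfaceRel
  rw [map_list_prod]
  apply List.prod_eq_one
  intro x hx
  simp only [List.map_ofFn, List.mem_ofFn] at hx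
  obtain ⟨i, rfl⟩ := hx
  simp [commE, killB]

/-- The retraction `SurfaceGroup g →* FreeGroup (Fin g)`. -/
def retr (g : ℕ) : SurfaceGroup g →* FreeGroup (Fin g) :=
  PresentedGroup.toGroup (f := killB g) (by
    intro r hr
    rw [Set.mem_singleton_iff] at hr
    subst hr
    exact killB_rel g)

/-- The inclusion `FreeGroup (Fin g) →* SurfaceGroup g`. -/
def incl (g : ℕ) : FreeGroup (Fin g) →* SurfaceGroup g :=
  FreeGroup.lift (fun i => PresentedGroup.of (Sum.inl i))

lemma retr_incl (g : ℕ) (x : FreeGroup (Fin g)) : retr g (incl g x) = x := by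
  have : (retr g).comp (incl g) = MonoidHom.id _ := by
    apply FreeGroup.ext_hom
    intro i
    simp [incl, retr, killB, PresentedGroup.toGroup.of]
  calc retr g (incl g x) = ((retr g).comp (incl g)) x := rfl
    _ = x := by rw [this]; rfl

lemma incl_injective (g : ℕ) : Function.Injective (incl g) :=
  Function.LeftInverse.injective (retr_incl g)

lemma incl_range (g : ℕ) :
    (incl g).range =
      Subgroup.closure (Set.range fun i : Fin g =>
        (PresentedGroup.of (Sum.inl i) : SurfaceGroup g)) := by
  rw [incl, FreeGroup.range_lift_eq_closure]

/-- In the genus-`g` surface group, the subgroup generated by `a₁,…,a_g` is free of rank `g`. -/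
theorem subgroup_gen_by_a_is_free (g : ℕ) (hg : 1 ≤ g) :
    Nonempty
      ((Subgroup.closure
          (Set.range fun i : Fin g =>
            (PresentedGroup.of (Sum.inl i) : SurfaceGroup g))) ≃*
        FreeGroup (Fin g)) := by
  refine ⟨((MulEquiv.subgroupCongr (incl_range g).symm).trans
    (MonoidHom.ofInjective (incl_injective g)).symm)⟩
end
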